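/- arXiv:1809.07443 — 2 statements merged into one kernel-verified Lean document; each statement's English description precedes it below -/
import Mathlib

section
/- Let R be a unital associative algebra over ℚ (not necessarily commutative), and let x, y ∈ R be nilpotent elements with x^N = 0 for some integer N > 1 and [x,y]^{(k)} = 0 for some positive integer k. Then the element Σ_{i=0}^{k-1} (1/i!) [x,y]^{(i)} satisfies (Σ_{i=0}^{k-1} (1/i!) [x,y]^{(i)})^N = 0; in particular it is nilpotent. -/
/-- Iterated commutator: `iterComm x y 0 = x`, `iterComm x y (k+1) = [iterComm x y k, y]`
where `[a, b] = a * b - b * a`. -/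
def iterComm {R : Type*} [Ring R] (x y : R) : ℕ → R
  | 0 => x
  | k + 1 => iterComm x y k * y - y * iterComm x y k

/-- The exponential of a nilpotent element of a `ℚ`-algebra: the (finite) sum
`∑ i, aⁱ/i!`, truncated at the nilpotency class of `a` (all higher terms vanish,
so the sum is well-defined). -/
noncomputable def nilExp {R : Type*} [Ring R] [Algebra ℚ R] (a : R) : R :=
  ∑ i ∈ Finset.range (nilpotencyClass a), ((i.factorial : ℚ)⁻¹) • a ^ i

open Finset

section Aux

variable {R : Type*} [Ring R] [Algebra ℚ R] (x y : R)

lemma iterComm_eq_end (n : ℕ) :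
    iterComm x y n = ((LinearMap.mulRight ℚ y - LinearMap.mulLeft ℚ y) ^ n) x := by
  induction n with
  | zero => simp [iterComm]
  | succ n ih =>
    rw [pow_succ', Module.End.mul_apply]
    simp [iterComm, ih]

lemma mulLeft_neg' : LinearMap.mulLeft ℚ (-y) = -(LinearMap.mulLeft ℚ y) := by
  ext z; simp

lemma iterComm_expand (n : ℕ) :
    iterComm x y n = ∑ j ∈ range (n + 1),
      (n.choose j) • ((-y) ^ (n - j) * (x * y ^ j)) := by
  have hc : Commute (LinearMap.mulRight ℚ y) (-(LinearMap.mulLeft ℚ y)) :=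
    ((LinearMap.commute_mulLeft_right (R := ℚ) y y).symm).neg_right
  rw [iterComm_eq_end, sub_eq_add_neg, Commute.add_pow hc n, LinearMap.sum_apply]
  refine Finset.sum_congr rfl fun j hj => ?_
  rw [← mulLeft_neg', LinearMap.pow_mulRight, LinearMap.pow_mulLeft]
  simp [mul_smul_comm, smul_mul_assoc, mul_assoc]
  exact ((Nat.cast_commute (n.choose j) ((-y) ^ (n - j))).symm).left_comm _

omit [Algebra ℚ R] in
lemma iterComm_zero_of_le {x y : R} {k : ℕ} (hk : iterComm x y k = 0)
    {n : ℕ} (hn : k ≤ n) : iterComm x y n = 0 := by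
  obtain ⟨j, rfl⟩ := Nat.exists_eq_add_of_le hn
  induction j with
  | zero => exact hk
  | succ j ih =>
      show iterComm x y (k + j) * y - y * iterComm x y (k + j) = 0
      rw [ih (Nat.le_add_right k j)]; simp

end Aux

lemma fact_coeff {n j : ℕ} (hj : j ≤ n) :
    (n.factorial : ℚ)⁻¹ * (n.choose j : ℚ) =
      ((n - j).factorial : ℚ)⁻¹ * ((j.factorial : ℚ))⁻¹ := by
  have h := Nat.choose_mul_factorial_mul_factorial hj
  have h' : (n.choose j : ℚ) * (j.factorial : ℚ) * ((n - j).factorial : ℚ) = n.factorial := by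
    exact_mod_cast congrArg (Nat.cast : ℕ → ℚ) h
  have h1 : (n.factorial : ℚ) ≠ 0 := Nat.cast_ne_zero.2 n.factorial_ne_zero
  have h2 : (j.factorial : ℚ) ≠ 0 := Nat.cast_ne_zero.2 j.factorial_ne_zero
  have h3 : ((n - j).factorial : ℚ) ≠ 0 := Nat.cast_ne_zero.2 (n - j).factorial_ne_zero
  field_simp
  linarith [h']

lemma alt_sum (m : ℕ) (hm : 0 < m) :
    ∑ j ∈ range (m + 1), ((j.factorial : ℚ))⁻¹ * (((m - j).factorial : ℚ))⁻¹ * (-1 : ℚ) ^ (m - j)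
      = 0 := by
  have h := add_pow (1 : ℚ) (-1) m
  rw [add_neg_cancel, zero_pow hm.ne'] at h
  have : ∀ j ∈ range (m + 1),
      ((j.factorial : ℚ))⁻¹ * (((m - j).factorial : ℚ))⁻¹ * (-1 : ℚ) ^ (m - j)
        = (m.factorial : ℚ)⁻¹ * ((1 : ℚ) ^ j * (-1 : ℚ) ^ (m - j) * (m.choose j : ℚ)) := by
    intro j hj
    rw [mul_comm ((j.factorial : ℚ))⁻¹, ← fact_coeff (Nat.lt_succ_iff.mp (mem_range.mp hj))]
    ring
  rw [Finset.sum_congr rfl this, ← Finset.mul_sum, ← h]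
  simp

theorem sum_iterComm_pow_eq_zero {R : Type*} [Ring R] [Algebra ℚ R]
    (x y : R) (hx : IsNilpotent x) (hy : IsNilpotent y)
    (N : ℕ) (hN : 1 < N) (hxN : x ^ N = 0)
    (k : ℕ) (hkpos : 0 < k) (hk : iterComm x y k = 0) :
    (∑ i ∈ Finset.range k, ((i.factorial : ℚ)⁻¹) • iterComm x y i) ^ N = 0 ∧
      IsNilpotent (∑ i ∈ Finset.range k, ((i.factorial : ℚ)⁻¹) • iterComm x y i) := by
  obtain ⟨m, hm⟩ := hy
  set K := k + 2 * m + 2 with hKdef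
  have hpow : ∀ n, m ≤ n → y ^ n = 0 := by
    intro n hn
    obtain ⟨j, rfl⟩ := Nat.exists_eq_add_of_le hn
    rw [pow_add, hm, zero_mul]
  have hnegy : (-y) = (-1 : ℚ) • y := by simp
  have hnegpow : ∀ n, m ≤ n → (-y) ^ n = 0 := by
    intro n hn
    rw [hnegy, smul_pow, hpow n hn, smul_zero]
  set A := ∑ p ∈ range K, ((p.factorial : ℚ))⁻¹ • (-y) ^ p with hA
  set B := ∑ q ∈ range K, ((q.factorial : ℚ))⁻¹ • y ^ q with hB
  set g : ℕ → ℕ → R := fun a b =>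
    (((a.factorial : ℚ))⁻¹ * ((b.factorial : ℚ))⁻¹) • ((-y) ^ a * (x * y ^ b)) with hg
  -- Main identity: S = A * (x * B)
  have hS : (∑ i ∈ Finset.range k, ((i.factorial : ℚ)⁻¹) • iterComm x y i) = A * (x * B) := by
    have step1 : (∑ i ∈ Finset.range k, ((i.factorial : ℚ)⁻¹) • iterComm x y i)
        = ∑ i ∈ Finset.range K, ((i.factorial : ℚ)⁻¹) • iterComm x y i := by
      refine Finset.sum_subset (range_subset_range.2 (by omega)) fun n _ hn => ?_
      rw [iterComm_zero_of_le hk (by simpa using hn), smul_zero]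
    have step2 : ∀ n, ((n.factorial : ℚ)⁻¹) • iterComm x y n
        = ∑ j ∈ range (n + 1), g j (n - j) := by
      intro n
      rw [iterComm_expand, Finset.smul_sum]
      have e1 : ∀ j ∈ range (n + 1),
          ((n.factorial : ℚ)⁻¹) • ((n.choose j) • ((-y) ^ (n - j) * (x * y ^ j)))
            = g (n - j) j := by
        intro j hj
        have hjn : j ≤ n := Nat.lt_succ_iff.mp (mem_range.mp hj)
        rw [← Nat.cast_smul_eq_nsmul ℚ, smul_smul, fact_coeff hjn, hg]
      rw [Finset.sum_congr rfl e1]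
      have := Finset.sum_range_reflect (fun j => g j (n - j)) (n + 1)
      simp only [Nat.add_sub_cancel] at this
      rw [← this]
      refine Finset.sum_congr rfl fun j hj => ?_
      have hjn : j ≤ n := Nat.lt_succ_iff.mp (mem_range.mp hj)
      rw [Nat.sub_sub_self hjn]
    have step4 : ∀ n ∈ range K, ∑ j ∈ range (K - n), g n j = ∑ j ∈ range K, g n j := by
      intro n _
      refine Finset.sum_subset (range_subset_range.2 (Nat.sub_le K n)) fun j _ hj => ?_
      have hjK : K - n ≤ j := by simpa using hj
      by_cases hmn : m ≤ n
      · rw [hg]; simp only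
        rw [hnegpow n hmn, zero_mul, smul_zero]
      · have : m ≤ j := by omega
        rw [hg]; simp only
        rw [hpow j this, mul_zero, mul_zero, smul_zero]
    have step5 : A * (x * B) = ∑ p ∈ range K, ∑ q ∈ range K, g p q := by
      have hxB : x * B = ∑ q ∈ range K, ((q.factorial : ℚ))⁻¹ • (x * y ^ q) := by
        rw [hB, Finset.mul_sum]
        exact Finset.sum_congr rfl fun q _ => mul_smul_comm _ _ _
      rw [hxB, hA, Finset.sum_mul_sum]
      refine Finset.sum_congr rfl fun p _ => Finset.sum_congr rfl fun q _ => ?_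
      rw [hg]; simp only
      rw [smul_mul_assoc, mul_smul_comm, smul_smul]
    rw [step1, Finset.sum_congr rfl fun n _ => step2 n, Finset.sum_range_diag_flip K g,
      Finset.sum_congr rfl step4, step5]
  -- B * A = 1
  have hBA : B * A = 1 := by
    set h2 : ℕ → ℕ → R := fun a b =>
      (((a.factorial : ℚ))⁻¹ * ((b.factorial : ℚ))⁻¹ * (-1 : ℚ) ^ b) • y ^ (a + b) with hh2
    have e1 : B * A = ∑ q ∈ range K, ∑ p ∈ range K, h2 q p := by
      rw [hB, hA, Finset.sum_mul_sum]
      refine Finset.sum_congr rfl fun q _ => Finset.sum_congr rfl fun p _ => ?_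
      rw [hh2]; simp only
      rw [hnegy, smul_pow, smul_mul_assoc, mul_smul_comm, smul_smul, mul_smul_comm,
        smul_smul, ← pow_add]
    have e2 : ∀ q ∈ range K, ∑ p ∈ range K, h2 q p = ∑ p ∈ range (K - q), h2 q p := by
      intro q _
      refine (Finset.sum_subset (range_subset_range.2 (Nat.sub_le K q)) fun p _ hp => ?_).symm
      have : K - q ≤ p := by simpa using hp
      rw [hh2]; simp only
      rw [hpow (q + p) (by omega), smul_zero]
    have e3 : ∀ n ∈ range K, ∑ j ∈ range (n + 1), h2 j (n - j)
        = (∑ j ∈ range (n + 1),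
            ((j.factorial : ℚ))⁻¹ * (((n - j).factorial : ℚ))⁻¹ * (-1 : ℚ) ^ (n - j)) • y ^ n := by
      intro n _
      rw [Finset.sum_smul]
      refine Finset.sum_congr rfl fun j hj => ?_
      have hjn : j ≤ n := Nat.lt_succ_iff.mp (mem_range.mp hj)
      rw [hh2]; simp only
      rw [Nat.add_sub_cancel' hjn]
    rw [e1, Finset.sum_congr rfl e2, ← Finset.sum_range_diag_flip K h2,
      Finset.sum_congr rfl e3]
    rw [Finset.sum_eq_single 0]
    · simp
    · intro n _ hn
      rw [alt_sum n (Nat.pos_of_ne_zero hn), zero_smul]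
    · intro h0
      exact absurd (mem_range.mpr (by omega)) h0
  -- conjugate powers
  have hconj : ∀ n : ℕ, (A * (x * B)) ^ (n + 1) = A * (x ^ (n + 1) * B) := by
    intro n
    induction n with
    | zero => simp
    | succ n ih =>
      rw [pow_succ, ih]
      have e : A * (x ^ (n + 1) * B) * (A * (x * B))
          = A * (x ^ (n + 1) * ((B * A) * (x * B))) := by
        simp only [mul_assoc]
      rw [e, hBA, one_mul, pow_succ x (n + 1), mul_assoc]
  obtain ⟨N', rfl⟩ : ∃ N', N = N' + 1 := ⟨N - 1, by omega⟩
  have hfin : (∑ i ∈ Finset.range k, ((i.factorial : ℚ)⁻¹) • iterComm x y i) ^ (N' + 1) = 0 := by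
    rw [hS, hconj N', hxN, zero_mul, mul_zero]
  exact ⟨hfin, ⟨N' + 1, hfin⟩⟩
end

section
/- Let R be a unital associative algebra over ℚ (not necessarily commutative), and let x, y ∈ R be nilpotent elements with x^N = 0 for some integer N > 1 and [x,y]^{(k)} = 0 for some positive integer k. Then e^{-y} e^{x} e^{y} = exp(Σ_{i=0}^{k-1} (1/i!) [x,y]^{(i)}), where the exponential on the right-hand side is well-defined since Σ_{i=0}^{k-1} (1/i!) [x,y]^{(i)} is nilpotent. -/
open IsNilpotent LinearMap Finset

theorem nilExp_eq_exp {R : Type*} [Ring R] [Algebra ℚ R] (a : R) : nilExp a = exp a := rfl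

namespace IsNilpotent

theorem exp_units_conj {A : Type*} [Ring A] [Module ℚ A] {a : A} (u : Aˣ) (ha : IsNilpotent a) :
    exp (u * a * ↑u⁻¹) = u * exp a * ↑u⁻¹ := by
  simpa [ConjAct.units_smul_def] using exp_smul (ConjAct.toConjAct u) ha

variable {A : Type*} [Ring A] [Algebra ℚ A] {a : A}

theorem exp_mulLeft (ha : IsNilpotent a) : exp (mulLeft ℚ a) = mulLeft ℚ (exp a) := by
  obtain ⟨n, hn⟩ := ha
  rw [exp_eq_sum hn, exp_eq_sum (k := n) (by rw [pow_mulLeft, hn, mulLeft_zero_eq_zero])]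
  ext z
  simp [sum_mul]

theorem exp_mulRight (ha : IsNilpotent a) : exp (mulRight ℚ a) = mulRight ℚ (exp a) := by
  obtain ⟨n, hn⟩ := ha
  rw [exp_eq_sum hn, exp_eq_sum (k := n) (by rw [pow_mulRight, hn, mulRight_zero_eq_zero])]
  ext z
  simp [mul_sum]

end IsNilpotent

section

variable {R : Type*} [Ring R] [Algebra ℚ R]

theorem iterComm_eq_pow_apply (x y : R) (i : ℕ) :
    iterComm x y i = ((mulLeft ℚ (-y) + mulRight ℚ y) ^ i) x := by
  induction i with
  | zero => rfl
  | succ i ih => simp [iterComm, pow_succ', ih, sub_eq_neg_add]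

theorem exp_neg_mul_mul_exp_eq_sum_iterComm {x y : R} (hy : IsNilpotent y) {k : ℕ}
    (hk : iterComm x y k = 0) :
    exp (-y) * x * exp y = ∑ i ∈ range k, (i.factorial : ℚ)⁻¹ • iterComm x y i := by
  have hcomm := commute_mulLeft_right (R := ℚ) (-y) y
  have hL : IsNilpotent (mulLeft ℚ (-y)) := (isNilpotent_mulLeft_iff ℚ _).2 hy.neg
  have hR : IsNilpotent (mulRight ℚ y) := (isNilpotent_mulRight_iff ℚ _).2 hy
  calc exp (-y) * x * exp y = exp (mulLeft ℚ (-y) + mulRight ℚ y) x := by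
        rw [exp_add_of_commute hcomm hL hR, exp_mulLeft hy.neg, exp_mulRight hy,
          Module.End.mul_apply, mulLeft_apply, mulRight_apply, mul_assoc]
    _ = ∑ i ∈ range k, (i.factorial : ℚ)⁻¹ • iterComm x y i := by
        rw [← Module.End.smul_def, exp_smul_eq_sum (k := k) _ (hcomm.isNilpotent_add hL hR)]
        · simp [iterComm_eq_pow_apply]
        · rwa [Module.End.smul_def, ← iterComm_eq_pow_apply]

end

theorem exp_conj_exp_eq_exp_sum_iterComm_general {R : Type*} [Ring R] [Algebra ℚ R]
    (x y : R) (hx : IsNilpotent x) (hy : IsNilpotent y)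
    (k : ℕ) (hk : iterComm x y k = 0) :
    nilExp (-y) * nilExp x * nilExp y =
      nilExp (∑ i ∈ Finset.range k, ((i.factorial : ℚ)⁻¹) • iterComm x y i) := by
  let u : Rˣ := ⟨exp (-y), exp y, exp_neg_mul_exp_self hy, exp_mul_exp_neg_self hy⟩
  simp only [nilExp_eq_exp]
  rw [← exp_neg_mul_mul_exp_eq_sum_iterComm hy hk]
  exact (exp_units_conj u hx).symm

theorem exp_conj_exp_eq_exp_sum_iterComm {R : Type*} [Ring R] [Algebra ℚ R]
    (x y : R) (hx : IsNilpotent x) (hy : IsNilpotent y)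
    (N : ℕ) (hN : 1 < N) (hxN : x ^ N = 0)
    (k : ℕ) (hkpos : 0 < k) (hk : iterComm x y k = 0) :
    nilExp (-y) * nilExp x * nilExp y =
      nilExp (∑ i ∈ Finset.range k, ((i.factorial : ℚ)⁻¹) • iterComm x y i) :=
  exp_conj_exp_eq_exp_sum_iterComm_general x y hx hy k hk
end
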